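/- arXiv:1409.8622 — 2 statements merged into one kernel-verified Lean document; each statement's English description precedes it below -/
import Mathlib

section
/- Fix integers r ≥ 1, m' ≥ 1 and d ≥ 1 with d ≤ r-m'+1, and let w := (s_1 s_2 ⋯ s_r)·(s_1 s_2 ⋯ s_{r-1})⋯(s_1 s_2 ⋯ s_{r-m'+2})·(s_1 s_2 ⋯ s_d) be the product of m' blocks, where the ζ-th block (1 ≤ ζ ≤ m'-1) is s_1 s_2 ⋯ s_{r-ζ+1} and the last block is s_1 s_2 ⋯ s_d. Then the image of the set {1,2,...,d} under the permutation w equals {m'+1, m'+2, ..., m'+d}. -/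
open Matrix BigOperators
open Fin.NatCast

noncomputable section

/-- Cartan matrix of type A (1-based indices). -/
def cartan (i j : ℕ) : ℤ :=
  if i = j then 2 else if i = j + 1 ∨ j = i + 1 then -1 else 0

/-- `y_i(t)`: identity except the `(i+1,i)` entry (1-based) equals `t`. -/
def yMat (r i : ℕ) (t : ℂ) : Matrix (Fin (r + 1)) (Fin (r + 1)) ℂ :=
  Matrix.of fun a b =>
    if a = b then 1 else if a.val = i ∧ b.val + 1 = i then t else 0

/-- `α_i^∨(c)`: diagonal matrix with `c` in position `i`, `c⁻¹` in position `i+1` (1-based). -/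
def alphaMat (r i : ℕ) (c : ℂ) : Matrix (Fin (r + 1)) (Fin (r + 1)) ℂ :=
  Matrix.of fun a b =>
    if a = b then (if a.val + 1 = i then c else if a.val = i then c⁻¹ else 1) else 0

/-- `x_{-i}(t)`: identity except entries `(i,i) = t⁻¹`, `(i+1,i) = 1`, `(i+1,i+1) = t` (1-based). -/
def xneg (r i : ℕ) (t : ℂ) : Matrix (Fin (r + 1)) (Fin (r + 1)) ℂ :=
  Matrix.of fun a b =>
    if a.val + 1 = i ∧ b.val + 1 = i then t⁻¹
    else if a.val = i ∧ b.val + 1 = i then 1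
    else if a = b then (if a.val = i then t else 1)
    else 0

/-- `l_ζ = r + (r-1) + ⋯ + (r-ζ+1)`. -/
def lv (r : ℕ) : ℕ → ℕ
  | 0 => 0
  | z + 1 => lv r z + (r - z)

/-- One cycle `x_{-1}(τ_{base+1}) x_{-2}(τ_{base+2}) ⋯ x_{-len}(τ_{base+len})`. -/
def cyc (r : ℕ) (τ : ℕ → ℂ) (base len : ℕ) : Matrix (Fin (r + 1)) (Fin (r + 1)) ℂ :=
  ((List.range len).map fun j => xneg r (j + 1) (τ (base + j + 1))).prod

/-- The matrix `M(τ) = x_{-i_1}(τ_1) ⋯ x_{-i_n}(τ_n)` for the word with `m-1` full cycles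
`(1,…,r-ζ+1)` followed by a last cycle `(1,…,d)`. -/
def Mword (r m d : ℕ) (τ : ℕ → ℂ) : Matrix (Fin (r + 1)) (Fin (r + 1)) ℂ :=
  ((List.range (m - 1)).map fun z => cyc r τ (lv r z) (r - z)).prod *
    cyc r τ (lv r (m - 1)) d

/-- Determinant of the `d×d` submatrix with rows `m'+1,…,m'+d` and columns `1,…,d` (1-based). -/
def minorD (r m' d : ℕ) (M : Matrix (Fin (r + 1)) (Fin (r + 1)) ℂ) : ℂ :=
  (M.submatrix (fun p : Fin d => ((m' + p.val : ℕ) : Fin (r + 1)))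
      (fun q : Fin d => ((q.val : ℕ) : Fin (r + 1)))).det

/-- `τ_{l_ζ + j}`, with the conventions `τ_{l_ζ+0} := 1` and `τ_{l_ζ+r+1} := 1`. -/
def tau2 {K : Type*} [Field K] (r : ℕ) (τ : ℕ → K) (z j : ℕ) : K :=
  if j = 0 ∨ j = r + 1 then 1 else τ (lv r z + j)

/-- The Laurent monomial `C̄(ζ,j) = τ_{l_ζ+j-1} / τ_{l_ζ+j}`. -/
def Cbar {K : Type*} [Field K] (r : ℕ) (τ : ℕ → K) (z j : ℕ) : K :=
  tau2 r τ z (j - 1) / tau2 r τ z j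

/-- The Laurent monomial `A_{ζ,j} = (τ_{l_ζ+j} τ_{l_{ζ+1}+j}) / (τ_{l_ζ+j+1} τ_{l_{ζ+1}+j-1})`. -/
def Amon {K : Type*} [Field K] (r : ℕ) (τ : ℕ → K) (z j : ℕ) : K :=
  tau2 r τ z j * tau2 r τ (z + 1) j / (tau2 r τ z (j + 1) * tau2 r τ (z + 1) (j - 1))

/-- Membership in `X_d(m,m')`: families `(a^{(s)}_i)` of positive integers, strictly increasing
in `i`, going up by `0` or `1` in `s`, with `a^{(0)}_i = i` and `a^{(m)}_i = m'+i` (1-based `i`). -/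
def IsPath (m d m' : ℕ) (p : Fin (m + 1) → Fin d → ℕ) : Prop :=
  (∀ s i, 1 ≤ p s i) ∧
  (∀ (s : Fin (m + 1)) (i i' : Fin d), i < i' → p s i < p s i') ∧
  (∀ (s : Fin m) (i : Fin d),
    p s.succ i = p s.castSucc i ∨ p s.succ i = p s.castSucc i + 1) ∧
  (∀ i : Fin d, p 0 i = i.val + 1 ∧ p (Fin.last m) i = m' + i.val + 1)

instance (m d m' : ℕ) (p : Fin (m + 1) → Fin d → ℕ) : Decidable (IsPath m d m' p) := by
  unfold IsPath; infer_instance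

/-- The label `Q(p) = ∏_{s=0}^{m-1} ∏_{i=1}^{d} τ_{l_{m-s-1}+a^{(s+1)}_i-1} / τ_{l_{m-s-1}+a^{(s)}_i}`. -/
def Qlab {K : Type*} [Field K] (r m d : ℕ) (τ : ℕ → K) (p : Fin (m + 1) → Fin d → ℕ) : K :=
  ∏ s : Fin m, ∏ i : Fin d,
    tau2 r τ (m - 1 - s.val) (p s.succ i - 1) / tau2 r τ (m - 1 - s.val) (p s.castSucc i)

/-- The cycle `s_1 ⋯ s_k` (0-based swaps). -/
def fblk (r k : ℕ) : Equiv.Perm (Fin (r + 1)) :=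
  ((List.range k).map fun j =>
    Equiv.swap ((j : ℕ) : Fin (r + 1)) ((j + 1 : ℕ) : Fin (r + 1))).prod

lemma fblk_fix (r : ℕ) (k : ℕ) (hk : k ≤ r) (v : Fin (r + 1)) (hv : k < v.val) :
    fblk r k v = v := by
  induction k with
  | zero => simp [fblk]
  | succ n ih =>
    rw [fblk, List.range_succ, List.map_append, List.prod_append]
    simp only [List.map_cons, List.map_nil, List.prod_cons, List.prod_nil, mul_one]
    rw [Equiv.Perm.mul_apply]
    have h1 : ((n : ℕ) : Fin (r + 1)).val = n := Fin.val_cast_of_lt (by omega)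
    have h2 : ((n + 1 : ℕ) : Fin (r + 1)).val = n + 1 := Fin.val_cast_of_lt (by omega)
    rw [Equiv.swap_apply_of_ne_of_ne
      (fun h => by rw [h] at hv; omega) (fun h => by rw [h] at hv; omega)]
    exact ih (by omega) (by omega)

lemma fblk_apply (r : ℕ) (k : ℕ) (hk : k ≤ r) (v : Fin (r + 1)) (hv : v.val < k) :
    fblk r k v = ⟨v.val + 1, by omega⟩ := by
  induction k with
  | zero => omega
  | succ n ih =>
    rw [fblk, List.range_succ, List.map_append, List.prod_append]
    simp only [List.map_cons, List.map_nil, List.prod_cons, List.prod_nil, mul_one]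
    rw [Equiv.Perm.mul_apply]
    have h1 : ((n : ℕ) : Fin (r + 1)).val = n := Fin.val_cast_of_lt (by omega)
    have h2 : ((n + 1 : ℕ) : Fin (r + 1)).val = n + 1 := Fin.val_cast_of_lt (by omega)
    rcases Nat.lt_or_ge v.val n with hlt | hge
    · rw [Equiv.swap_apply_of_ne_of_ne
        (fun h => by rw [h] at hlt; omega) (fun h => by rw [h] at hlt; omega)]
      exact ih (by omega) hlt
    · have hv' : v.val = n := by omega
      have hsw : Equiv.swap ((n : ℕ) : Fin (r + 1)) ((n + 1 : ℕ) : Fin (r + 1)) v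
          = ((n + 1 : ℕ) : Fin (r + 1)) := by
        rw [show v = ((n : ℕ) : Fin (r + 1)) from Fin.ext (by omega)]
        exact Equiv.swap_apply_left _ _
      rw [hsw]
      have := fblk_fix r n (by omega) ((n + 1 : ℕ) : Fin (r + 1)) (by omega)
      rw [fblk] at this
      rw [this]
      apply Fin.ext
      show ((n + 1 : ℕ) : Fin (r + 1)).val = v.val + 1
      omega

lemma fblk_blocks (r : ℕ) (n : ℕ) (v : Fin (r + 1)) (hv : v.val + n ≤ r) :
    ((List.range n).map fun z => fblk r (r - z)).prod v = ⟨v.val + n, by omega⟩ := by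
  induction n generalizing v with
  | zero => simpa using Fin.ext (by omega : v.val = v.val + 0)
  | succ n ih =>
    rw [List.range_succ, List.map_append, List.prod_append]
    simp only [List.map_cons, List.map_nil, List.prod_cons, List.prod_nil, mul_one]
    rw [Equiv.Perm.mul_apply, fblk_apply r (r - n) (by omega) v (by omega)]
    rw [ih ⟨v.val + 1, by omega⟩ (by simp; omega)]
    exact Fin.ext (by simp; omega)

/-- the image of `{1,…,d}` under
`w = (s_1⋯s_r)(s_1⋯s_{r-1})⋯(s_1⋯s_{r-m'+2})(s_1⋯s_d)` equals `{m'+1,…,m'+d}`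
(here 0-based: the image of `{x : x < d}` is `{x : m' ≤ x < m'+d}`). -/
theorem statement7 (r m' d : ℕ) (hr : 1 ≤ r) (hm'1 : 1 ≤ m') (hd1 : 1 ≤ d)
    (hd : d + m' ≤ r + 1) :
    (fun x : Fin (r + 1) =>
        ((((List.range (m' - 1)).map fun z =>
              ((List.range (r - z)).map fun j =>
                Equiv.swap ((j : ℕ) : Fin (r + 1)) ((j + 1 : ℕ) : Fin (r + 1))).prod).prod *
          ((List.range d).map fun j =>
              Equiv.swap ((j : ℕ) : Fin (r + 1)) ((j + 1 : ℕ) : Fin (r + 1))).prod) x)) ''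
        {x : Fin (r + 1) | x.val < d} =
      {x : Fin (r + 1) | m' ≤ x.val ∧ x.val < m' + d} := by
  have key : ∀ (x : Fin (r + 1)) (hx : x.val < d),
      (((List.range (m' - 1)).map fun z => fblk r (r - z)).prod * fblk r d) x
        = ⟨x.val + m', by omega⟩ := by
    intro x hx
    rw [Equiv.Perm.mul_apply, fblk_apply r d (by omega) x hx,
      fblk_blocks r (m' - 1) ⟨x.val + 1, by omega⟩ (by simp; omega)]
    exact Fin.ext (by simp; omega)
  ext y
  simp only [Set.mem_image, Set.mem_setOf_eq]
  constructor
  · rintro ⟨x, hx, rfl⟩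
    rw [show (((List.range (m' - 1)).map fun z =>
          ((List.range (r - z)).map fun j =>
            Equiv.swap ((j : ℕ) : Fin (r + 1)) ((j + 1 : ℕ) : Fin (r + 1))).prod).prod *
        ((List.range d).map fun j =>
            Equiv.swap ((j : ℕ) : Fin (r + 1)) ((j + 1 : ℕ) : Fin (r + 1))).prod) x
        = (((List.range (m' - 1)).map fun z => fblk r (r - z)).prod * fblk r d) x from rfl,
      key x hx]
    refine ⟨Nat.le_add_left _ _, ?_⟩
    show x.val + m' < m' + d
    omega
  · rintro ⟨h1, h2⟩
    refine ⟨⟨y.val - m', by omega⟩, by simpa using (by omega : y.val - m' < d), ?_⟩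
    rw [show (((List.range (m' - 1)).map fun z =>
          ((List.range (r - z)).map fun j =>
            Equiv.swap ((j : ℕ) : Fin (r + 1)) ((j + 1 : ℕ) : Fin (r + 1))).prod).prod *
        ((List.range d).map fun j =>
            Equiv.swap ((j : ℕ) : Fin (r + 1)) ((j + 1 : ℕ) : Fin (r + 1))).prod)
          (⟨y.val - m', by omega⟩ : Fin (r + 1))
        = (((List.range (m' - 1)).map fun z => fblk r (r - z)).prod * fblk r d)
          ⟨y.val - m', by omega⟩ from rfl,
      key _ (by simpa using (by omega : y.val - m' < d))]
    exact Fin.ext (by simp; omega)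
end
end

section
/- Let p = (a^{(s)}_i) ∈ X_d(m,m') and suppose there exist indices 0 ≤ σ ≤ m-2 and 1 ≤ q ≤ d such that a^{(σ)}_q = a^{(σ+1)}_q, a^{(σ+2)}_q = a^{(σ+1)}_q + 1, and moreover either q = d or a^{(σ+1)}_{q+1} > a^{(σ+1)}_q + 1. Set s := a^{(σ+1)}_q. Then the family p' obtained from p by replacing the single entry a^{(σ+1)}_q with s+1 (leaving all other entries unchanged) again belongs to X_d(m,m'), and Q(p') = Q(p) · A_{m-σ-2, s}. -/
open Matrix BigOperators
open Fin.NatCast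

noncomputable section

lemma st13_lv_add_le (r a k : ℕ) (h : a + k ≤ r) : lv r a + k ≤ lv r (a + k) := by
  induction k with
  | zero => simp
  | succ n ih =>
    have h1 : lv r a + n ≤ lv r (a + n) := ih (by omega)
    have h2 : lv r (a + (n + 1)) = lv r (a + n) + (r - (a + n)) := rfl
    omega

lemma st13_lv_mono (r : ℕ) : Monotone (lv r) := by
  apply monotone_nat_of_le_succ
  intro n
  have : lv r (n + 1) = lv r n + (r - n) := rfl
  omega

lemma st13_tau2_ne (r N : ℕ) {τ : ℕ → ℂ} (hτ : ∀ j, 1 ≤ j → j ≤ N → τ j ≠ 0)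
    (z j : ℕ) (hb : lv r z + j ≤ N) : tau2 r τ z j ≠ 0 := by
  unfold tau2
  split
  · exact one_ne_zero
  · next h =>
    push_neg at h
    exact hτ _ (by omega) (by omega)

lemma st13_ub {m d m' : ℕ} {p : Fin (m + 1) → Fin d → ℕ} (hp : IsPath m d m' p) :
    ∀ (k : ℕ) (hk : k < m + 1) (i : Fin d), p ⟨k, hk⟩ i ≤ i.val + 1 + k := by
  intro k
  induction k with
  | zero =>
    intro hk i
    have h0 := (hp.2.2.2 i).1
    have e : (⟨0, hk⟩ : Fin (m + 1)) = 0 := Fin.ext (by simp)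
    rw [e, h0]
  | succ n ih =>
    intro hk i
    have hn : n < m := by omega
    have hst := hp.2.2.1 ⟨n, hn⟩ i
    have e1 : (⟨n, hn⟩ : Fin m).succ = ⟨n + 1, hk⟩ := rfl
    have e2 : (⟨n, hn⟩ : Fin m).castSucc = ⟨n, by omega⟩ := rfl
    rw [e1, e2] at hst
    have := ih (by omega) i
    omega

lemma st13_two_point {m d : ℕ} (F G : Fin m → Fin d → ℂ) (a b : Fin m) (q : Fin d)
    (hab : a ≠ b) (A : ℂ)
    (hsame : ∀ s i, ¬(s = a ∧ i = q) → ¬(s = b ∧ i = q) → F s i = G s i)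
    (hkey : F a q * F b q = G a q * G b q * A) :
    (∏ s, ∏ i, F s i) = (∏ s, ∏ i, G s i) * A := by
  classical
  have hbmem : b ∈ Finset.univ.erase a :=
    Finset.mem_erase.mpr ⟨Ne.symm hab, Finset.mem_univ b⟩
  rw [← Finset.mul_prod_erase Finset.univ (fun s => ∏ i, F s i) (Finset.mem_univ a),
      ← Finset.mul_prod_erase _ (fun s => ∏ i, F s i) hbmem,
      ← Finset.mul_prod_erase Finset.univ (fun s => ∏ i, G s i) (Finset.mem_univ a),
      ← Finset.mul_prod_erase _ (fun s => ∏ i, G s i) hbmem]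
  have hrest : (∏ s ∈ (Finset.univ.erase a).erase b, ∏ i, F s i)
      = ∏ s ∈ (Finset.univ.erase a).erase b, ∏ i, G s i := by
    refine Finset.prod_congr rfl fun s hs => Finset.prod_congr rfl fun i _ => ?_
    have hs1 := (Finset.mem_erase.mp hs).1
    have hs2 := (Finset.mem_erase.mp (Finset.mem_erase.mp hs).2).1
    exact hsame s i (fun h => hs2 h.1) (fun h => hs1 h.1)
  have hFa : (∏ i, F a i) = F a q * ∏ i ∈ Finset.univ.erase q, F a i :=
    (Finset.mul_prod_erase _ _ (Finset.mem_univ q)).symm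
  have hFb : (∏ i, F b i) = F b q * ∏ i ∈ Finset.univ.erase q, F b i :=
    (Finset.mul_prod_erase _ _ (Finset.mem_univ q)).symm
  have hGa : (∏ i, G a i) = G a q * ∏ i ∈ Finset.univ.erase q, G a i :=
    (Finset.mul_prod_erase _ _ (Finset.mem_univ q)).symm
  have hGb : (∏ i, G b i) = G b q * ∏ i ∈ Finset.univ.erase q, G b i :=
    (Finset.mul_prod_erase _ _ (Finset.mem_univ q)).symm
  have hEa : (∏ i ∈ Finset.univ.erase q, F a i) = ∏ i ∈ Finset.univ.erase q, G a i :=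
    Finset.prod_congr rfl fun i hi =>
      hsame a i (fun h => (Finset.mem_erase.mp hi).1 h.2) (fun h => (Finset.mem_erase.mp hi).1 h.2)
  have hEb : (∏ i ∈ Finset.univ.erase q, F b i) = ∏ i ∈ Finset.univ.erase q, G b i :=
    Finset.prod_congr rfl fun i hi =>
      hsame b i (fun h => (Finset.mem_erase.mp hi).1 h.2) (fun h => (Finset.mem_erase.mp hi).1 h.2)
  rw [hrest, hFa, hFb, hGa, hGb, hEa, hEb]
  set Ea := ∏ i ∈ Finset.univ.erase q, G a i
  set Eb := ∏ i ∈ Finset.univ.erase q, G b i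
  set R := ∏ s ∈ (Finset.univ.erase a).erase b, ∏ i, G s i
  linear_combination (Ea * Eb * R) * hkey

/-- replacing the single entry `a^{(σ+1)}_q` of a path by `a^{(σ+1)}_q + 1`
(under the stated conditions) gives again a path `p'`, with `Q(p') = Q(p)·A_{m-σ-2,s}`. -/
theorem statement13 (r m d m' : ℕ) (hr : 1 ≤ r) (hm1 : 1 ≤ m) (hmr : m ≤ r)
    (hd1 : 1 ≤ d) (hd : d ≤ r - m + 1) (hm'1 : 1 ≤ m') (hm'm : m' ≤ m)
    (τ : ℕ → ℂ) (hτ : ∀ j, 1 ≤ j → j ≤ lv r (m - 1) + d → τ j ≠ 0)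
    (p : Fin (m + 1) → Fin d → ℕ) (hp : IsPath m d m' p)
    (σ : ℕ) (hσ : σ + 2 ≤ m) (qq : Fin d)
    (h1 : p ((σ : ℕ) : Fin (m + 1)) qq = p ((σ + 1 : ℕ) : Fin (m + 1)) qq)
    (h2 : p ((σ + 2 : ℕ) : Fin (m + 1)) qq = p ((σ + 1 : ℕ) : Fin (m + 1)) qq + 1)
    (h3 : ∀ q' : Fin d, q'.val = qq.val + 1 →
      p ((σ + 1 : ℕ) : Fin (m + 1)) qq + 1 < p ((σ + 1 : ℕ) : Fin (m + 1)) q') :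
    IsPath m d m'
      (fun s i => if s = ((σ + 1 : ℕ) : Fin (m + 1)) ∧ i = qq then p s i + 1 else p s i) ∧
    Qlab r m d τ
      (fun s i => if s = ((σ + 1 : ℕ) : Fin (m + 1)) ∧ i = qq then p s i + 1 else p s i) =
      Qlab r m d τ p * Amon r τ (m - σ - 2) (p ((σ + 1 : ℕ) : Fin (m + 1)) qq) := by
  obtain ⟨hpos, hmono, hstep, hbd⟩ := hp
  set c1 : Fin (m + 1) := ((σ + 1 : ℕ) : Fin (m + 1)) with hc1def
  have hc1 : c1.val = σ + 1 := by rw [hc1def]; exact Fin.val_cast_of_lt (by omega)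
  set p2 : Fin (m + 1) → Fin d → ℕ :=
    fun s i => if s = c1 ∧ i = qq then p s i + 1 else p s i with hp2
  have hσlt : σ < m + 1 := by omega
  have e0 : ((σ : ℕ) : Fin (m + 1)) = ⟨σ, hσlt⟩ := by
    apply Fin.ext
    simp only [Fin.val_cast_of_lt (show σ < m + 1 by omega)]
  have hvub : p c1 qq ≤ qq.val + 1 + σ := by
    have h := st13_ub (m' := m') ⟨hpos, hmono, hstep, hbd⟩ σ hσlt qq
    rw [e0] at h1
    omega
  constructor
  · refine ⟨?_, ?_, ?_, ?_⟩
    · intro s i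
      simp only [hp2]
      split
      · omega
      · exact hpos s i
    · intro s i i' hii'
      simp only [hp2]
      by_cases hs : s = c1
      · subst hs
        by_cases hi' : i' = qq
        · subst hi'
          rw [if_neg (fun h => ne_of_lt hii' h.2), if_pos ⟨rfl, rfl⟩]
          exact Nat.lt_succ_of_lt (hmono _ _ _ hii')
        · by_cases hi : i = qq
          · subst hi
            rw [if_pos ⟨rfl, rfl⟩, if_neg (fun h => hi' h.2)]
            have hlt : i.val < i'.val := hii'
            rcases Nat.lt_or_ge (i.val + 1) i'.val with hgt | hge
            · have hq'd : i.val + 1 < d := lt_trans hgt i'.isLt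
              have ha := h3 ⟨i.val + 1, hq'd⟩ rfl
              have hb2 := hmono c1 ⟨i.val + 1, hq'd⟩ i' (by simpa [Fin.lt_def] using hgt)
              omega
            · exact h3 i' (by omega)
          · rw [if_neg (fun h => hi h.2), if_neg (fun h => hi' h.2)]
            exact hmono _ _ _ hii'
      · rw [if_neg (fun h => hs h.1), if_neg (fun h => hs h.1)]
        exact hmono _ _ _ hii'
    · intro s i
      simp only [hp2]
      by_cases hi : i = qq
      · subst hi
        by_cases hA : s.val = σ
        · have eS : s.succ = c1 := by
            apply Fin.ext
            simp only [Fin.val_succ, hA, hc1]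
          have eC : s.castSucc = ((σ : ℕ) : Fin (m + 1)) := by
            apply Fin.ext
            simp only [Fin.coe_castSucc, hA, Fin.val_cast_of_lt (show σ < m + 1 by omega)]
          have eCne : ¬(s.castSucc = c1 ∧ i = i) := by
            intro h
            have hv := congrArg Fin.val h.1
            simp only [Fin.coe_castSucc, hc1, hA] at hv
            omega
          rw [if_pos ⟨eS, rfl⟩, if_neg eCne, eS, eC]
          right
          rw [h1]
        · by_cases hB : s.val = σ + 1
          · have eS : s.succ = ((σ + 2 : ℕ) : Fin (m + 1)) := by
              apply Fin.ext
              simp only [Fin.val_succ, hB, Fin.val_cast_of_lt (show σ + 2 < m + 1 by omega)]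
            have eC : s.castSucc = c1 := by
              apply Fin.ext
              simp only [Fin.coe_castSucc, hB, hc1]
            have eSne : ¬(s.succ = c1 ∧ i = i) := by
              intro h
              have hv := congrArg Fin.val h.1
              simp only [Fin.val_succ, hc1, hB] at hv
              omega
            rw [if_neg eSne, if_pos ⟨eC, rfl⟩, eS, eC, h2]
            left
            rfl
          · have eSne : ¬(s.succ = c1 ∧ i = i) := by
              intro h
              have hv := congrArg Fin.val h.1
              simp only [Fin.val_succ, hc1] at hv
              omega
            have eCne : ¬(s.castSucc = c1 ∧ i = i) := by
              intro h
              have hv := congrArg Fin.val h.1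
              simp only [Fin.coe_castSucc, hc1] at hv
              omega
            rw [if_neg eSne, if_neg eCne]
            exact hstep s i
      · rw [if_neg (fun h => hi h.2), if_neg (fun h => hi h.2)]
        exact hstep s i
    · intro i
      constructor
      · simp only [hp2]
        rw [if_neg (show ¬((0 : Fin (m + 1)) = c1 ∧ i = qq) from fun h => by
          have hv := congrArg Fin.val h.1
          rw [Fin.val_zero, hc1] at hv
          omega)]
        exact (hbd i).1
      · simp only [hp2]
        rw [if_neg (show ¬(Fin.last m = c1 ∧ i = qq) from fun h => by
          have hv := congrArg Fin.val h.1
          rw [Fin.val_last, hc1] at hv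
          omega)]
        exact (hbd i).2
  · unfold Qlab
    have hlv1 : lv r (m - 1 - σ) + σ ≤ lv r (m - 1) := by
      have h := st13_lv_add_le r (m - 1 - σ) σ (by omega)
      have e : m - 1 - σ + σ = m - 1 := by omega
      rw [e] at h
      exact h
    have hlv2 : lv r (m - σ - 2) ≤ lv r (m - 1 - σ) := st13_lv_mono r (by omega)
    have hqd : qq.val < d := qq.isLt
    have ht2 : tau2 r τ (m - 1 - σ) (p c1 qq) ≠ 0 := st13_tau2_ne _ _ hτ _ _ (by omega)
    have ht1 : tau2 r τ (m - 1 - σ) (p c1 qq - 1) ≠ 0 := st13_tau2_ne _ _ hτ _ _ (by omega)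
    have ht3 : tau2 r τ (m - σ - 2) (p c1 qq) ≠ 0 := st13_tau2_ne _ _ hτ _ _ (by omega)
    refine st13_two_point _ _ ⟨σ, by omega⟩ ⟨σ + 1, by omega⟩ qq
      (fun h => by have : σ = σ + 1 := congrArg Fin.val h; omega) _ ?_ ?_
    · intro s i hA hB
      have e1 : p2 s.succ i = p s.succ i := by
        simp only [hp2]
        rw [if_neg]
        intro h
        apply hA
        have hv : s.val + 1 = σ + 1 := by
          have := congrArg Fin.val h.1
          simpa only [Fin.val_succ, hc1] using this
        exact ⟨Fin.ext (show s.val = σ by omega), h.2⟩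
      have e2 : p2 s.castSucc i = p s.castSucc i := by
        simp only [hp2]
        rw [if_neg]
        intro h
        apply hB
        have hv : s.val = σ + 1 := by
          have := congrArg Fin.val h.1
          simpa only [Fin.coe_castSucc, hc1] using this
        exact ⟨Fin.ext (show s.val = σ + 1 from hv), h.2⟩
      rw [e1, e2]
    · dsimp only
      have eSσ : (⟨σ, by omega⟩ : Fin m).succ = c1 := by
        apply Fin.ext
        simp only [Fin.val_succ, hc1]
      have eCσ : (⟨σ, by omega⟩ : Fin m).castSucc = ((σ : ℕ) : Fin (m + 1)) := by
        apply Fin.ext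
        simp only [Fin.coe_castSucc, Fin.val_cast_of_lt (show σ < m + 1 by omega)]
      have eSσ1 : (⟨σ + 1, by omega⟩ : Fin m).succ = ((σ + 2 : ℕ) : Fin (m + 1)) := by
        apply Fin.ext
        simp only [Fin.val_succ, Fin.val_cast_of_lt (show σ + 2 < m + 1 by omega)]
      have eCσ1 : (⟨σ + 1, by omega⟩ : Fin m).castSucc = c1 := by
        apply Fin.ext
        simp only [Fin.coe_castSucc, hc1]
      rw [eSσ, eCσ, eSσ1, eCσ1]
      have hne01 : ¬(((σ : ℕ) : Fin (m + 1)) = c1 ∧ qq = qq) := by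
        intro h
        have hv := congrArg Fin.val h.1
        simp only [Fin.val_cast_of_lt (show σ < m + 1 by omega), hc1] at hv
        omega
      have hne21 : ¬(((σ + 2 : ℕ) : Fin (m + 1)) = c1 ∧ qq = qq) := by
        intro h
        have hv := congrArg Fin.val h.1
        simp only [Fin.val_cast_of_lt (show σ + 2 < m + 1 by omega), hc1] at hv
        omega
      have hp21 : p2 c1 qq = p c1 qq + 1 := by
        simp only [hp2]
        split
        · rfl
        · next h => exact absurd (by simp) h
      have hp20 : p2 ((σ : ℕ) : Fin (m + 1)) qq = p c1 qq := by
        simp only [hp2]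
        split
        · next h =>
            exfalso
            have hv := congrArg Fin.val h.1
            simp only [Fin.val_cast_of_lt (show σ < m + 1 by omega), hc1] at hv
            omega
        · exact h1
      have hp22 : p2 ((σ + 2 : ℕ) : Fin (m + 1)) qq = p c1 qq + 1 := by
        simp only [hp2]
        split
        · next h =>
            exfalso
            have hv := congrArg Fin.val h.1
            simp only [Fin.val_cast_of_lt (show σ + 2 < m + 1 by omega), hc1] at hv
            omega
        · exact h2
      rw [hp21, hp20, hp22, h2, h1]
      simp only [show ((⟨σ, by omega⟩ : Fin m) : ℕ) = σ from rfl,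
        show ((⟨σ + 1, by omega⟩ : Fin m) : ℕ) = σ + 1 from rfl,
        Nat.add_sub_cancel]
      have hz2 : m - 1 - (σ + 1) = m - σ - 2 := by omega
      rw [hz2]
      simp only [Amon]
      have hz1 : m - σ - 2 + 1 = m - 1 - σ := by omega
      rw [hz1]
      rcases eq_or_ne (tau2 r τ (m - σ - 2) (p c1 qq + 1)) 0 with h4 | h4
      · rw [h4]
        simp [div_zero]
      · field_simp
end
end
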